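/- If x ∉ 𝕂 and y ∈ 𝕂 realizes the distance d(x,𝕂) = d(x,y) (i.e., y has the longest common prefix with x among all points of 𝕂), then for every n ≥ 0, H^n(y) realizes the distance from H^n(x) to 𝕂: d(H^n(x),𝕂) = d(H^n(x),H^n(y)). -/

import Mathlib

/-!
Writing `H(x)` as the concatenation `H(x₀) H(x₁) ⋯`, every letter of `H(x)` beginning a block is
`0`, and the block `H(xₘ)` is recovered from the two letters at its start. Hence if `x` and `y`
first differ at position `m` and `L = |H(x₀ ⋯ x_{m-1})|`, then `H(x)` and `H(y)` share `L + 1`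
letters. A point of `𝕂` sharing `L + 2` letters with `H(x)` begins with `0`, hence is `H(w)` for
some `w ∈ 𝕂` (every shift of `ρ = H(ρ)` is `H(w)` or `H(w)` with its first letter removed, and this
passes to the closure), and `w` shares `m + 1` letters with `x`, contradicting the choice of `y`.
-/

/-- Fibonacci substitution on finite words: H(0)=01, H(1)=0 (0 ↦ `false`, 1 ↦ `true`). -/
def Hword : List Bool → List Bool
  | [] => []
  | false :: t => false :: true :: Hword t
  | true :: t => false :: Hword t

/-- Paper-indexed Fibonacci numbers, shifted by 2: `fibP k = F_{k-2}`, so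
`fibP 0 = F_{-2} = 1`, `fibP 1 = F_{-1} = 0`, `fibP 2 = F_0 = 1`, `fibP 3 = F_1 = 1`, … -/
def fibP : ℕ → ℕ
  | 0 => 1
  | 1 => 0
  | n + 2 => fibP (n + 1) + fibP n

/-- Fibonacci substitution on infinite binary sequences. -/
def Hseq (x : ℕ → Bool) : ℕ → Bool :=
  fun n => (Hword ((List.range (n + 1)).map x)).getD n false

/-- The left shift on infinite binary sequences. -/
def shift (x : ℕ → Bool) : ℕ → Bool := fun n => x (n + 1)

open Function PiNat

lemma Hword_append (a b : List Bool) : Hword (a ++ b) = Hword a ++ Hword b := by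
  induction a with
  | nil => rfl
  | cons h t ih => cases h <;> simp [Hword, ih]

lemma length_le_length_Hword (l : List Bool) : l.length ≤ (Hword l).length := by
  induction l with
  | nil => simp [Hword]
  | cons h t ih => cases h <;> simp [Hword] <;> omega

lemma iterate_shift_apply (m : ℕ) (x : ℕ → Bool) (k : ℕ) : shift^[m] x k = x (m + k) := by
  induction m generalizing x with
  | zero => simp
  | succ m ih => rw [iterate_succ_apply, ih, shift, Nat.add_right_comm, Nat.add_assoc]

lemma continuous_shift : Continuous shift := continuous_pi fun n => continuous_apply (n + 1)

def prefixWord (x : ℕ → Bool) (m : ℕ) : List Bool := (List.range m).map x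

lemma length_prefixWord (x : ℕ → Bool) (m : ℕ) : (prefixWord x m).length = m := by
  simp [prefixWord]

lemma prefixWord_add (x : ℕ → Bool) (a b : ℕ) :
    prefixWord x (a + b) = prefixWord x a ++ prefixWord (shift^[a] x) b := by
  simp [prefixWord, List.range_add, iterate_shift_apply]

lemma prefixWord_congr {x y : ℕ → Bool} {m : ℕ} (h : ∀ i < m, x i = y i) :
    prefixWord x m = prefixWord y m :=
  List.map_congr_left fun i hi => h i (List.mem_range.mp hi)

lemma Hseq_apply (x : ℕ → Bool) (n : ℕ) :
    Hseq x n = (Hword (prefixWord x (n + 1))).getD n false := rfl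

def Hlen (x : ℕ → Bool) (m : ℕ) : ℕ := (Hword (prefixWord x m)).length

lemma le_Hlen (x : ℕ → Bool) (m : ℕ) : m ≤ Hlen x m := by
  have := length_le_length_Hword (prefixWord x m)
  rwa [length_prefixWord] at this

lemma Hlen_add (x : ℕ → Bool) (a b : ℕ) : Hlen x (a + b) = Hlen x a + Hlen (shift^[a] x) b := by
  simp [Hlen, prefixWord_add, Hword_append]

lemma Hlen_congr {x y : ℕ → Bool} {m : ℕ} (h : ∀ i < m, x i = y i) : Hlen x m = Hlen y m := by
  rw [Hlen, Hlen, prefixWord_congr h]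

lemma Hlen_one (x : ℕ → Bool) : Hlen x 1 = if x 0 then 1 else 2 := by
  cases h : x 0 <;> simp [Hlen, prefixWord, h, Hword]

lemma Hseq_eq_getD {x : ℕ → Bool} {m k : ℕ} (hk : k < Hlen x m) :
    Hseq x k = (Hword (prefixWord x m)).getD k false := by
  rcases le_or_gt (k + 1) m with hm | hm
  · obtain ⟨r, rfl⟩ := Nat.exists_eq_add_of_le hm
    have : k < Hlen x (k + 1) := le_Hlen x (k + 1)
    rw [prefixWord_add, Hword_append, List.getD_append _ _ _ _ this, Hseq_apply]
  · obtain ⟨r, hr⟩ := Nat.exists_eq_add_of_le (show m ≤ k + 1 by omega)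
    rw [Hseq_apply, hr, prefixWord_add, Hword_append, List.getD_append _ _ _ _ hk]

lemma Hseq_iterate_shift (x : ℕ → Bool) (m : ℕ) :
    Hseq (shift^[m] x) = shift^[Hlen x m] (Hseq x) := by
  funext k
  have hk : Hlen x m + k < Hlen x (m + (k + 1)) := by
    rw [Hlen_add]; have := le_Hlen (shift^[m] x) (k + 1); omega
  rw [iterate_shift_apply, Hseq_eq_getD hk, prefixWord_add, Hword_append, Hlen,
    List.getD_append_right _ _ _ _ (Nat.le_add_right _ _), Nat.add_sub_cancel_left, Hseq_apply]

lemma Hseq_shift (x : ℕ → Bool) : Hseq (shift x) = shift^[Hlen x 1] (Hseq x) :=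
  Hseq_iterate_shift x 1

lemma Hseq_zero (x : ℕ → Bool) : Hseq x 0 = false := by
  cases h : x 0 <;> simp [Hseq_apply, prefixWord, h, Hword]

lemma Hseq_one (x : ℕ → Bool) : Hseq x 1 = !x 0 := by
  cases h0 : x 0 <;> cases h1 : x 1 <;>
    simp [Hseq_apply, prefixWord, List.range_succ, h0, h1, Hword]

lemma Hseq_Hlen (x : ℕ → Bool) (m : ℕ) : Hseq x (Hlen x m) = false := by
  simpa [iterate_shift_apply, Hseq_zero] using (congrFun (Hseq_iterate_shift x m) 0).symm

lemma continuous_Hseq : Continuous Hseq := by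
  refine continuous_pi fun n => continuous_discrete_rng.2 fun b => isOpen_iff_forall_mem_open.2 ?_
  intro x hx
  refine ⟨cylinder x (n + 1), fun y hy => ?_, isOpen_cylinder _ x _, self_mem_cylinder x _⟩
  rw [Set.mem_preimage, Hseq_apply, prefixWord_congr (mem_cylinder_iff.1 hy)]
  exact hx

lemma Hseq_eq_of_eq_below {x y : ℕ → Bool} {m : ℕ} (h : ∀ i < m, x i = y i) :
    ∀ k < Hlen x m + 1, Hseq x k = Hseq y k := by
  intro k hk
  rcases Nat.lt_or_ge k (Hlen x m) with hlt | hge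
  · rw [Hseq_eq_getD hlt, Hseq_eq_getD (Hlen_congr h ▸ hlt), prefixWord_congr h]
  · obtain rfl : k = Hlen x m := by omega
    rw [Hseq_Hlen, Hlen_congr h, Hseq_Hlen]

lemma eq_of_Hseq_eq_below (m : ℕ) {x y : ℕ → Bool}
    (h : ∀ k < Hlen x m + 2, Hseq x k = Hseq y k) : ∀ i ≤ m, x i = y i := by
  induction m generalizing x y with
  | zero =>
    intro i hi
    obtain rfl : i = 0 := by omega
    simpa [Hseq_one] using h 1 (by omega)
  | succ m ih =>
    have h0 : x 0 = y 0 := by simpa [Hseq_one] using h 1 (by omega)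
    have htail : ∀ i ≤ m, shift x i = shift y i := by
      refine ih fun k hk => ?_
      have := h (Hlen x 1 + k) (by rw [add_comm m, Hlen_add]; simp only [iterate_one]; omega)
      have h1 : Hlen x 1 = Hlen y 1 := Hlen_congr (by simpa using h0)
      rwa [Hseq_shift, Hseq_shift, ← h1, iterate_shift_apply, iterate_shift_apply]
    rintro (_ | i) hi
    · exact h0
    · exact htail i (by omega)

lemma exists_iterate_shift_Hseq (u : ℕ → Bool) (n : ℕ) :
    ∃ j, shift^[n] (Hseq u) = Hseq (shift^[j] u) ∨
      shift^[n] (Hseq u) = shift (Hseq (shift^[j] u)) := by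
  induction n with
  | zero => exact ⟨0, .inl rfl⟩
  | succ n ih =>
    obtain ⟨j, hj | hj⟩ := ih
    · exact ⟨j, .inr (by rw [iterate_succ_apply', hj])⟩
    · have hshift := Hseq_shift (shift^[j] u)
      rw [Hlen_one, ← iterate_succ_apply' shift j u] at hshift
      refine ⟨j + 1, ?_⟩
      rw [iterate_succ_apply', hj]
      split_ifs at hshift
      · exact .inr (by rw [hshift]; rfl)
      · exact .inl hshift.symm

def orbitClosure (ρ : ℕ → Bool) : Set (ℕ → Bool) := closure (Set.range fun n => shift^[n] ρ)

section OrbitClosure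

variable {ρ : ℕ → Bool}

lemma iterate_shift_mem_orbitClosure (n : ℕ) : shift^[n] ρ ∈ orbitClosure ρ :=
  subset_closure ⟨n, rfl⟩

lemma shift_mem_orbitClosure {z : ℕ → Bool} (hz : z ∈ orbitClosure ρ) :
    shift z ∈ orbitClosure ρ :=
  map_mem_closure continuous_shift hz <| by
    rintro _ ⟨n, rfl⟩
    exact ⟨n + 1, iterate_succ_apply' shift n ρ⟩

lemma Hseq_mem_orbitClosure (hρ : Hseq ρ = ρ) {z : ℕ → Bool} (hz : z ∈ orbitClosure ρ) :
    Hseq z ∈ orbitClosure ρ :=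
  map_mem_closure continuous_Hseq hz <| by
    rintro _ ⟨n, rfl⟩
    exact ⟨Hlen ρ n, by rw [Hseq_iterate_shift, hρ]⟩

lemma mem_Hseq_image_orbitClosure (hρ : Hseq ρ = ρ) {z : ℕ → Bool} (hz : z ∈ orbitClosure ρ)
    (hz0 : z 0 = false) : z ∈ Hseq '' orbitClosure ρ := by
  suffices orbitClosure ρ ⊆ {z | z 0 = true} ∪ Hseq '' orbitClosure ρ by
    simpa [hz0] using this hz
  have hclosed : IsClosed ({z : ℕ → Bool | z 0 = true} ∪ Hseq '' orbitClosure ρ) :=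
    (isClosed_eq (continuous_apply 0) continuous_const).union
      ((isClosed_closure.isCompact.image continuous_Hseq).isClosed)
  refine closure_minimal ?_ hclosed
  rintro _ ⟨n, rfl⟩
  change shift^[n] ρ ∈ _
  obtain ⟨j, hj | hj⟩ := exists_iterate_shift_Hseq ρ n
  · rw [hρ] at hj
    exact .inr ⟨_, iterate_shift_mem_orbitClosure j, hj.symm⟩
  · rw [hρ] at hj
    cases hv : (shift^[j] ρ) 0
    · left
      simp [hj, shift, Hseq_one, hv]
    · right
      refine ⟨shift (shift^[j] ρ), shift_mem_orbitClosure (iterate_shift_mem_orbitClosure j), ?_⟩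
      rw [hj, Hseq_shift, Hlen_one, hv]
      rfl

end OrbitClosure

/-- `d(x, K) = d(x, y)` with `y ∈ K`: no point of `K` shares a longer prefix with `x`. -/
def RealizesDist (K : Set (ℕ → Bool)) (x y : ℕ → Bool) : Prop :=
  y ∈ K ∧ ∀ z ∈ K, ∀ m : ℕ, (∀ i < m, x i = z i) → ∀ i < m, x i = y i

lemma RealizesDist.map_Hseq {ρ x y : ℕ → Bool} (hρ : Hseq ρ = ρ)
    (h : RealizesDist (orbitClosure ρ) x y) :
    RealizesDist (orbitClosure ρ) (Hseq x) (Hseq y) := by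
  obtain ⟨hy, hbest⟩ := h
  refine ⟨Hseq_mem_orbitClosure hρ hy, ?_⟩
  rcases eq_or_ne x y with rfl | hxy
  · exact fun _ _ _ _ _ _ => rfl
  set m := firstDiff x y
  have hxy_below : ∀ i < m, x i = y i := fun i hi => apply_eq_of_lt_firstDiff hi
  have hfar : ∀ z ∈ orbitClosure ρ, ¬ ∀ i < Hlen x m + 2, Hseq x i = z i := by
    intro z hz hxz
    obtain ⟨w, hw, rfl⟩ :=
      mem_Hseq_image_orbitClosure hρ hz (by rw [← hxz 0 (by omega), Hseq_zero])
    have hxw := eq_of_Hseq_eq_below m hxz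
    exact apply_firstDiff_ne hxy (hbest w hw (m + 1) (fun i hi => hxw i (by omega)) m (by omega))
  intro z hz k hxz i hi
  have hk : k ≤ Hlen x m + 1 := by
    by_contra! hk
    exact hfar z hz fun i hi => hxz i (by omega)
  exact Hseq_eq_of_eq_below hxy_below i (by omega)

theorem Hn_realizes_distance_general (ρ : ℕ → Bool) (hρ : Hseq ρ = ρ)
    (K : Set (ℕ → Bool)) (hK : K = closure (Set.range fun n => shift^[n] ρ))
    (x y : ℕ → Bool) (hy : y ∈ K)
    (hbest : ∀ z ∈ K, ∀ m : ℕ, (∀ i < m, x i = z i) → ∀ i < m, x i = y i)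
    (n : ℕ) :
    Hseq^[n] y ∈ K ∧
    ∀ z ∈ K, ∀ m : ℕ, (∀ i < m, Hseq^[n] x i = z i) →
      ∀ i < m, Hseq^[n] x i = Hseq^[n] y i := by
  subst hK
  induction n with
  | zero => exact ⟨hy, hbest⟩
  | succ n ih =>
    rw [iterate_succ_apply', iterate_succ_apply']
    exact RealizesDist.map_Hseq hρ ih

/-- if `y ∈ 𝕂` realizes the distance from `x ∉ 𝕂` to `𝕂` (i.e. `y` has the
longest common prefix with `x` among points of `𝕂`), then for every `n ≥ 0`, `H^n(y) ∈ 𝕂`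
realizes the distance from `H^n(x)` to `𝕂`. -/
theorem Hn_realizes_distance (ρ : ℕ → Bool) (hρ : Hseq ρ = ρ)
    (K : Set (ℕ → Bool)) (hK : K = closure (Set.range fun n => shift^[n] ρ))
    (x y : ℕ → Bool) (hx : x ∉ K) (hy : y ∈ K)
    (hbest : ∀ z ∈ K, ∀ m : ℕ, (∀ i < m, x i = z i) → ∀ i < m, x i = y i)
    (n : ℕ) :
    Hseq^[n] y ∈ K ∧
    ∀ z ∈ K, ∀ m : ℕ, (∀ i < m, Hseq^[n] x i = z i) →
      ∀ i < m, Hseq^[n] x i = Hseq^[n] y i :=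
  Hn_realizes_distance_general ρ hρ K hK x y hy hbest n
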